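/- The map φ satisfies, as identities of F-linear maps on V: φ∘A_L = Q(A_L − K B_R)∘φ, φ∘B_L = Q(B_L − K⁻¹ A_R)∘φ, φ∘(Q(A*_ℓ − B*_r K)) = A*_ℓ∘φ, and φ∘(Q(B*_ℓ − A*_r K⁻¹)) = B*_ℓ∘φ. -/

import Mathlib

noncomputable section
namespace SqPaper

/-- The two letters: `0 ↦ A`, `1 ↦ B`. -/
abbrev Ltr := Fin 2
def lA : Ltr := 0
def lB : Ltr := 1

/-- The pairing `⟨ , ⟩` on letters: `⟨A,A⟩=⟨B,B⟩=2`, `⟨A,B⟩=⟨B,A⟩=-2`. -/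
def brk (x y : Ltr) : ℤ := if x = y then 2 else -2

variable (F : Type*) [Field F]

/-- The free algebra `V` on the two generators, realized as the monoid algebra of the
free monoid on two letters; the words form the standard basis. -/
abbrev FA := MonoidAlgebra F (FreeMonoid Ltr)

/-- The standard basis vector attached to a word (list of letters). -/
def wd (l : List Ltr) : FA F := MonoidAlgebra.single (FreeMonoid.ofList l) 1

def Agen : FA F := wd F [lA]
def Bgen : FA F := wd F [lB]

/-- View an element of `V` as a finitely supported function on words. -/
def fsp (v : FA F) : FreeMonoid Ltr →₀ F := v.coeff

/-- The symmetric bilinear form on `V` for which the standard basis of words is orthonormal. -/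
def form (u v : FA F) : F := (fsp F u).sum fun w c => c * (fsp F v) w

/-- Extend a function on words to an `F`-linear map on `V`. -/
def mkMap {M : Type*} [AddCommMonoid M] [Module F M] (f : List Ltr → M) :
    FA F →ₗ[F] M :=
  (Finsupp.lsum F fun w => LinearMap.toSpanSingleton F M (f (FreeMonoid.toList w))) ∘ₗ
    (MonoidAlgebra.coeffLinearEquiv F).toLinearMap

/-- `[3]_q = (q³ - q⁻³)/(q - q⁻¹)`. -/
def tri (q : F) : F := (q ^ 3 - q⁻¹ ^ 3) / (q - q⁻¹)

/-- The q-shuffle product on words. -/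
def shufW (q : F) : List Ltr → List Ltr → FA F
  | [], v => wd F v
  | u, [] => wd F u
  | a :: u, b :: v =>
      wd F [a] * shufW q u (b :: v) +
        (q ^ (((a :: u).map (fun x => brk x b)).sum)) • (wd F [b] * shufW q (a :: u) v)
  termination_by u v => u.length + v.length

/-- The q-shuffle product `⋆` on `V`, as a bilinear map. -/
def qshuf (q : F) : FA F →ₗ[F] FA F →ₗ[F] FA F :=
  mkMap F fun u => mkMap F fun v => shufW F q u v

/-- Iterated `⋆`-product of the letters of a word. -/
def thetaW (q : F) : List Ltr → FA F
  | [] => 1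
  | a :: t => qshuf F q (wd F [a]) (thetaW q t)

/-- `θ : V → V`, the algebra homomorphism from the free algebra to the q-shuffle algebra
with `θ(A) = A`, `θ(B) = B`. -/
def theta (q : F) : FA F →ₗ[F] FA F := mkMap F fun l => thetaW F q l

/-- `A_L`, left multiplication by `A` in the free algebra. -/
def AL : FA F →ₗ[F] FA F := LinearMap.mulLeft F (Agen F)
def BL : FA F →ₗ[F] FA F := LinearMap.mulLeft F (Bgen F)
def AR : FA F →ₗ[F] FA F := LinearMap.mulRight F (Agen F)
def BR : FA F →ₗ[F] FA F := LinearMap.mulRight F (Bgen F)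

/-- `X*_L` (for the letter `x`): deletes the letter `x` from the front of a word. -/
def delL (x : Ltr) : FA F →ₗ[F] FA F :=
  mkMap F fun l => if l.head? = some x then wd F l.tail else 0

/-- `X*_R` (for the letter `x`): deletes the letter `x` from the end of a word. -/
def delR (x : Ltr) : FA F →ₗ[F] FA F :=
  mkMap F fun l => if l.getLast? = some x then wd F l.dropLast else 0

/-- `X_ℓ`: left q-shuffle multiplication by the letter `x`. -/
def shL (q : F) (x : Ltr) : FA F →ₗ[F] FA F := qshuf F q (wd F [x])

/-- `X_r`: right q-shuffle multiplication by the letter `x`. -/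
def shR (q : F) (x : Ltr) : FA F →ₗ[F] FA F := (qshuf F q).flip (wd F [x])

/-- `X*_ℓ`: the weighted deletion map, deleting an occurrence of the letter `x`
with weight `q^{⟨v₁,x⟩+⋯+⟨v_{i-1},x⟩}`. -/
def lowL (q : F) (x : Ltr) : FA F →ₗ[F] FA F :=
  mkMap F fun l =>
    ∑ i ∈ Finset.range l.length,
      if l[i]? = some x then
        (q ^ (((l.take i).map (fun y => brk y x)).sum)) • wd F (l.eraseIdx i)
      else 0

/-- `X*_r`: the weighted deletion map, deleting an occurrence of the letter `x`
with weight `q^{⟨vₙ,x⟩+⋯+⟨v_{i+1},x⟩}`. -/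
def lowR (q : F) (x : Ltr) : FA F →ₗ[F] FA F :=
  mkMap F fun l =>
    ∑ i ∈ Finset.range l.length,
      if l[i]? = some x then
        (q ^ (((l.drop (i + 1)).map (fun y => brk y x)).sum)) • wd F (l.eraseIdx i)
      else 0

/-- `K`, the algebra automorphism of the free algebra `V` with `K(A) = q²A`, `K(B) = q⁻²B`;
on a word `v = v₁⋯vₙ` it acts as `K(v) = v·q^{⟨v₁,A⟩+⋯+⟨vₙ,A⟩}`. -/
def Kop (q : F) : FA F →ₗ[F] FA F :=
  mkMap F fun l => (q ^ ((l.map (fun y => brk y lA)).sum)) • wd F l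

/-- `K⁻¹`; on a word `v = v₁⋯vₙ` it acts as `K⁻¹(v) = v·q^{⟨v₁,B⟩+⋯+⟨vₙ,B⟩}`. -/
def Kinv (q : F) : FA F →ₗ[F] FA F :=
  mkMap F fun l => (q ^ ((l.map (fun y => brk y lB)).sum)) • wd F l

/-- `T`, the automorphism of the free algebra swapping `A` and `B`. -/
def Top : FA F →ₗ[F] FA F :=
  mkMap F fun l => wd F (l.map (fun x => if x = lA then lB else lA))

/-- `Â = Q(A_L − K B_R)` and `B̂ = Q(B_L − K⁻¹ A_R)` where `Q = 1 - q²`. -/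
def hatOp (q : F) (a : Ltr) : FA F →ₗ[F] FA F :=
  if a = lA then (1 - q ^ 2) • (AL F - Kop F q ∘ₗ BR F)
  else (1 - q ^ 2) • (BL F - Kinv F q ∘ₗ AR F)

def phiW (q : F) : List Ltr → FA F
  | [] => 1
  | a :: t => hatOp F q a (phiW q t)

/-- The map `φ`: `φ(1) = 1` and `φ(v₁⋯vₙ) = v̂₁v̂₂⋯v̂ₙ(1)`. -/
def phi (q : F) : FA F →ₗ[F] FA F := mkMap F fun l => phiW F q l

/-- `ψ = K B_R A*_L + K⁻¹ A_R B*_L`. -/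
def psi (q : F) : FA F →ₗ[F] FA F :=
  Kop F q ∘ₗ BR F ∘ₗ delL F lA + Kinv F q ∘ₗ AR F ∘ₗ delL F lB

/-- `V_n`, the span of the words of length `n`. -/
def Vn (n : ℕ) : Submodule F (FA F) :=
  Submodule.span F { x | ∃ l : List Ltr, l.length = n ∧ x = wd F l }

/-- `J⁺ = A³B − [3]_q A²BA + [3]_q ABA² − BA³`. -/
def Jp (q : F) : FA F :=
  Agen F ^ 3 * Bgen F - tri F q • (Agen F ^ 2 * Bgen F * Agen F)
    + tri F q • (Agen F * Bgen F * Agen F ^ 2) - Bgen F * Agen F ^ 3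

/-- `J⁻ = B³A − [3]_q B²AB + [3]_q BAB² − AB³`. -/
def Jm (q : F) : FA F :=
  Bgen F ^ 3 * Agen F - tri F q • (Bgen F ^ 2 * Agen F * Bgen F)
    + tri F q • (Bgen F * Agen F * Bgen F ^ 2) - Agen F * Bgen F ^ 3

/-- `J`, the two-sided ideal of the free algebra generated by `J⁺` and `J⁻`
(realized as the `F`-span of the elements `a·J^±·b`). -/
def Jsub (q : F) : Submodule F (FA F) :=
  Submodule.span F { x | ∃ a b : FA F, x = a * Jp F q * b ∨ x = a * Jm F q * b }

/-- `U`, the subalgebra of the q-shuffle algebra `(V,⋆)` generated by `A` and `B`,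
realized as the span of all `⋆`-products of the letters. -/
def Usub (q : F) : Submodule F (FA F) :=
  Submodule.span F (Set.range fun l : List Ltr => thetaW F q l)

/-- A `□_q`-module structure on an `F`-vector space `M`: four operators
`x₀, x₁, x₂, x₃` (indices mod 4) satisfying the q-Weyl and q-Serre relations. -/
structure SqAct (q : F) (M : Type*) [AddCommGroup M] [Module F M] where
  x : ZMod 4 → Module.End F M
  weyl : ∀ i : ZMod 4,
    q • (x i * x (i + 1)) - q⁻¹ • (x (i + 1) * x i) = (q - q⁻¹) • (1 : Module.End F M)
  serre : ∀ i : ZMod 4,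
    x i ^ 3 * x (i + 2) - tri F q • (x i ^ 2 * x (i + 2) * x i)
      + tri F q • (x i * x (i + 2) * x i ^ 2) - x (i + 2) * x i ^ 3 = 0

variable {F} {q : F} {M : Type*} [AddCommGroup M] [Module F M]

/-- A `□_q`-module `M` is generated by `ξ` if no proper submodule
(subspace invariant under all the `xᵢ`) contains `ξ`. -/
def SqAct.Gen (S : SqAct F q M) (ξ : M) : Prop :=
  ∀ W : Submodule F M, (∀ i : ZMod 4, ∀ m ∈ W, S.x i m ∈ W) → ξ ∈ W → W = ⊤

/-- `W_n`: the span of the vectors `u₁u₂⋯uₙ·ξ` with each `uᵢ ∈ {x₀, x₂}`. -/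
def SqAct.Wn (S : SqAct F q M) (ξ : M) (n : ℕ) : Submodule F M :=
  Submodule.span F
    { m | ∃ l : List (ZMod 4), l.length = n ∧ (∀ i ∈ l, i = 0 ∨ i = 2) ∧
        m = l.foldr (fun i acc => S.x i acc) ξ }

end SqPaper

/-! Everything is checked on words. The first two identities are the recursion defining `φ`.
For the other two let `Ψ_x = Q(x*_ℓ − x'*_r K_x)`, `x'` the other letter. Since `x*_ℓ` is a
`K_x`-twisted derivation (`x*_ℓ(uv) = x*_ℓ(u) v + K_x(u) x*_ℓ(v)`), `Ψ_x` commutes past left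
multiplication by a letter exactly as `x*_ℓ` commutes past the corresponding hat operator:
`Ψ_x(xv) = Qv + q² xΨ_x(v)` and `x*_ℓ(x̂w) = Qw + q² x̂ x*_ℓ(w)`, and similarly with `q⁻²` for
`x'`. Induction on the length of a word then gives `φ Ψ_x = x*_ℓ φ`. -/

namespace SqPaper

variable {F : Type*} [Field F] {q : F}

theorem mkMap_wd {M : Type*} [AddCommMonoid M] [Module F M] (f : List Ltr → M) (l : List Ltr) :
    mkMap F f (wd F l) = f l := by
  simp [mkMap, wd, Finsupp.lsum, LinearMap.toSpanSingleton, MonoidAlgebra.coeff_single]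

theorem ext_wd {M : Type*} [AddCommMonoid M] [Module F M] {f g : FA F →ₗ[F] M}
    (h : ∀ l, f (wd F l) = g (wd F l)) : f = g :=
  MonoidAlgebra.lhom_ext' fun w => LinearMap.ext_ring <| by
    simpa [wd, FreeMonoid.ofList_toList] using h w.toList

theorem apply_eq_of_wd {M : Type*} [AddCommMonoid M] [Module F M] {f g : FA F →ₗ[F] M}
    (h : ∀ l, f (wd F l) = g (wd F l)) (v : FA F) : f v = g v :=
  LinearMap.congr_fun (ext_wd h) v

theorem wd_nil : (wd F [] : FA F) = 1 := rfl

theorem wd_append (l m : List Ltr) : wd F (l ++ m) = wd F l * wd F m := by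
  simp [wd, MonoidAlgebra.single_mul_single]

theorem wd_cons (a : Ltr) (l : List Ltr) : wd F (a :: l) = wd F [a] * wd F l :=
  wd_append [a] l

theorem rev_ne_self (x : Ltr) : x.rev ≠ x := by
  revert x; decide

theorem eq_or_eq_rev (a x : Ltr) : a = x ∨ a = x.rev := by
  revert a x; decide

theorem zpow_brk_self (x : Ltr) : q ^ brk x x = q ^ 2 := by
  simp [brk]

theorem zpow_brk_rev_left (x : Ltr) : q ^ brk x.rev x = (q ^ 2)⁻¹ := by
  rw [show brk x.rev x = -2 by revert x; decide, zpow_neg]; norm_cast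

theorem zpow_brk_rev_right (x : Ltr) : q ^ brk x x.rev = (q ^ 2)⁻¹ := by
  rw [show brk x x.rev = -2 by revert x; decide, zpow_neg]; norm_cast

/-- The operator `K_x`: `weightOp q lA` is `Kop F q` and `weightOp q lB` is `Kinv F q`,
definitionally. -/
def weightOp (q : F) (x : Ltr) : FA F →ₗ[F] FA F :=
  mkMap F fun l => (q ^ ((l.map (fun y => brk y x)).sum)) • wd F l

theorem weightOp_wd (x : Ltr) (l : List Ltr) :
    weightOp q x (wd F l) = (q ^ ((l.map (fun y => brk y x)).sum)) • wd F l :=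
  mkMap_wd _ _

theorem weightOp_one (x : Ltr) : weightOp q x (1 : FA F) = 1 := by
  rw [← wd_nil, weightOp_wd]; simp

theorem weightOp_wd_singleton (x a : Ltr) :
    weightOp q x (wd F [a]) = q ^ brk a x • wd F [a] := by
  simp [weightOp_wd]

theorem weightOp_mul (hq : q ≠ 0) (x : Ltr) (u v : FA F) :
    weightOp q x (u * v) = weightOp q x u * weightOp q x v := by
  have hwd (l m : List Ltr) : weightOp q x (wd F l * wd F m) =
      weightOp q x (wd F l) * weightOp q x (wd F m) := by
    rw [← wd_append, weightOp_wd, weightOp_wd, weightOp_wd, smul_mul_smul_comm, ← wd_append,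
      List.map_append, List.sum_append, zpow_add₀ hq]
  have hu (l : List Ltr) : weightOp q x (wd F l * v) = weightOp q x (wd F l) * weightOp q x v :=
    apply_eq_of_wd (f := weightOp q x ∘ₗ LinearMap.mulLeft F (wd F l))
      (g := LinearMap.mulLeft F (weightOp q x (wd F l)) ∘ₗ weightOp q x) (hwd l) v
  exact apply_eq_of_wd (f := weightOp q x ∘ₗ LinearMap.mulRight F v)
    (g := LinearMap.mulRight F (weightOp q x v) ∘ₗ weightOp q x) hu u

theorem weightOp_mul_left (hq : q ≠ 0) (x a : Ltr) (v : FA F) :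
    weightOp q x (wd F [a] * v) = q ^ brk a x • (wd F [a] * weightOp q x v) := by
  rw [weightOp_mul hq, weightOp_wd_singleton, smul_mul_assoc]

theorem weightOp_rev_weightOp (hq : q ≠ 0) (x : Ltr) (v : FA F) :
    weightOp q x.rev (weightOp q x v) = v := by
  refine apply_eq_of_wd (f := weightOp q x.rev ∘ₗ weightOp q x) (g := LinearMap.id)
    (fun l => ?_) v
  have hbrk (y : Ltr) : brk y x + brk y x.rev = 0 := by revert x y; decide
  simp only [LinearMap.comp_apply, LinearMap.id_apply, weightOp_wd, map_smul, smul_smul,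
    ← zpow_add₀ hq, ← List.sum_map_add, hbrk, List.map_const', List.sum_replicate, smul_zero,
    zpow_zero, one_smul]

theorem lowL_wd_cons (hq : q ≠ 0) (x a : Ltr) (l : List Ltr) :
    lowL F q x (wd F (a :: l)) =
      (if a = x then wd F l else 0) + q ^ brk a x • (wd F [a] * lowL F q x (wd F l)) := by
  simp only [lowL, mkMap_wd, List.length_cons]
  rw [Finset.sum_range_succ', add_comm, Finset.mul_sum, Finset.smul_sum]
  congr 1
  · simp
  · refine Finset.sum_congr rfl fun i _ => ?_
    simp only [List.getElem?_cons_succ, List.take_succ_cons, List.eraseIdx_cons_succ,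
      List.map_cons, List.sum_cons, mul_ite, smul_ite, mul_zero, smul_zero, zpow_add₀ hq,
      mul_smul_comm, ← wd_cons, smul_smul]

theorem lowL_one (x : Ltr) : lowL F q x (1 : FA F) = 0 := by
  simp [← wd_nil, lowL, mkMap_wd]

theorem lowL_mul_left (hq : q ≠ 0) (x a : Ltr) (v : FA F) :
    lowL F q x (wd F [a] * v) =
      (if a = x then v else 0) + q ^ brk a x • (wd F [a] * lowL F q x v) := by
  have h : lowL F q x ∘ₗ LinearMap.mulLeft F (wd F [a]) = (if a = x then LinearMap.id else 0) +
      q ^ brk a x • (LinearMap.mulLeft F (wd F [a]) ∘ₗ lowL F q x) :=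
    ext_wd fun l => by split_ifs <;> simp [← wd_cons, lowL_wd_cons hq, *]
  simpa [apply_ite (fun f : FA F →ₗ[F] FA F => f v)] using LinearMap.congr_fun h v

theorem lowL_wd_singleton (hq : q ≠ 0) (x a : Ltr) :
    lowL F q x (wd F [a]) = if a = x then 1 else 0 := by
  simpa [lowL_one] using lowL_mul_left hq x a 1

theorem lowL_mul (hq : q ≠ 0) (x : Ltr) (u v : FA F) :
    lowL F q x (u * v) = lowL F q x u * v + weightOp q x u * lowL F q x v := by
  have hu (l : List Ltr) : lowL F q x (wd F l * v) =
      lowL F q x (wd F l) * v + weightOp q x (wd F l) * lowL F q x v := by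
    induction l with
    | nil => simp [wd_nil, lowL_one, weightOp_one]
    | cons a l ih =>
      rw [wd_cons, mul_assoc, lowL_mul_left hq, ih, lowL_mul_left hq, weightOp_mul_left hq]
      split_ifs <;> simp only [add_mul, mul_add, smul_add, smul_mul_assoc, mul_assoc, zero_add,
        add_assoc]
  exact apply_eq_of_wd (f := lowL F q x ∘ₗ LinearMap.mulRight F v)
    (g := LinearMap.mulRight F v ∘ₗ lowL F q x +
      LinearMap.mulRight F (lowL F q x v) ∘ₗ weightOp q x) hu u

theorem lowL_mul_right (hq : q ≠ 0) (x b : Ltr) (v : FA F) :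
    lowL F q x (v * wd F [b]) =
      lowL F q x v * wd F [b] + (if b = x then weightOp q x v else 0) := by
  rw [lowL_mul hq, lowL_wd_singleton hq]
  split_ifs <;> simp

theorem lowR_one (x : Ltr) : lowR F q x (1 : FA F) = 0 := by
  simp [← wd_nil, lowR, mkMap_wd]

theorem lowR_wd_cons (x a : Ltr) (l : List Ltr) :
    lowR F q x (wd F (a :: l)) =
      (if a = x then weightOp q x (wd F l) else 0) + wd F [a] * lowR F q x (wd F l) := by
  simp only [lowR, mkMap_wd, weightOp_wd, List.length_cons]
  rw [Finset.sum_range_succ', add_comm, Finset.mul_sum]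
  congr 1
  · simp
  · refine Finset.sum_congr rfl fun i _ => ?_
    simp only [List.getElem?_cons_succ, List.eraseIdx_cons_succ, List.drop_succ_cons, mul_ite,
      mul_zero, mul_smul_comm, ← wd_cons]

theorem lowR_mul_left (x a : Ltr) (v : FA F) :
    lowR F q x (wd F [a] * v) =
      (if a = x then weightOp q x v else 0) + wd F [a] * lowR F q x v := by
  have h : lowR F q x ∘ₗ LinearMap.mulLeft F (wd F [a]) = (if a = x then weightOp q x else 0) +
      LinearMap.mulLeft F (wd F [a]) ∘ₗ lowR F q x :=
    ext_wd fun l => by split_ifs <;> simp [← wd_cons, lowR_wd_cons, *]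
  simpa [apply_ite (fun f : FA F →ₗ[F] FA F => f v)] using LinearMap.congr_fun h v

theorem lowL_weightOp (hq : q ≠ 0) (x z : Ltr) (v : FA F) :
    lowL F q x (weightOp q z v) = q ^ brk x z • weightOp q z (lowL F q x v) := by
  refine apply_eq_of_wd (f := lowL F q x ∘ₗ weightOp q z)
    (g := q ^ brk x z • (weightOp q z ∘ₗ lowL F q x)) (fun l => ?_) v
  simp only [LinearMap.comp_apply, LinearMap.smul_apply]
  induction l with
  | nil => simp [wd_nil, weightOp_one, lowL_one]
  | cons a l ih =>
    rw [wd_cons, weightOp_mul_left hq, map_smul, lowL_mul_left hq, lowL_mul_left hq, map_add,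
      map_smul, weightOp_mul_left hq, ih]
    split_ifs with hax
    · subst hax; simp only [smul_add, mul_smul_comm, smul_smul, mul_comm]
    · simp only [map_zero, zero_add, mul_smul_comm, smul_smul]; ring_nf

theorem hatOp_apply (x : Ltr) (v : FA F) :
    hatOp F q x v = (1 - q ^ 2) • (wd F [x] * v - weightOp q x (v * wd F [x.rev])) := by
  fin_cases x <;> rfl

theorem lowL_hatOp_self (hq : q ≠ 0) (x : Ltr) (v : FA F) :
    lowL F q x (hatOp F q x v) = (1 - q ^ 2) • v + q ^ 2 • hatOp F q x (lowL F q x v) := by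
  rw [hatOp_apply, hatOp_apply, map_smul, map_sub, lowL_mul_left hq, lowL_weightOp hq,
    lowL_mul_right hq, if_pos rfl, if_neg (rev_ne_self x), zpow_brk_self, add_zero]
  module

theorem lowL_hatOp_rev (hq : q ≠ 0) (x : Ltr) (v : FA F) :
    lowL F q x (hatOp F q x.rev v) =
      (q ^ 2)⁻¹ • hatOp F q x.rev (lowL F q x v) - ((1 - q ^ 2) * (q ^ 2)⁻¹) • v := by
  rw [hatOp_apply, hatOp_apply, Fin.rev_rev, map_smul, map_sub, lowL_mul_left hq,
    lowL_weightOp hq, lowL_mul_right hq, if_neg (rev_ne_self x), if_pos rfl, map_add,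
    weightOp_rev_weightOp hq, zpow_brk_rev_left, zpow_brk_rev_right, zero_add]
  module

/-- `Q(x*_ℓ − x'*_r K_x)`, where `x'` is the other letter. -/
def lowHat (q : F) (x : Ltr) : FA F →ₗ[F] FA F :=
  (1 - q ^ 2) • (lowL F q x - lowR F q x.rev ∘ₗ weightOp q x)

theorem lowHat_one (x : Ltr) : lowHat q x (1 : FA F) = 0 := by
  simp [lowHat, lowL_one, weightOp_one, lowR_one]

theorem lowHat_mul_left_self (hq : q ≠ 0) (x : Ltr) (v : FA F) :
    lowHat q x (wd F [x] * v) = (1 - q ^ 2) • v + q ^ 2 • (wd F [x] * lowHat q x v) := by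
  simp only [lowHat, LinearMap.smul_apply, LinearMap.sub_apply, LinearMap.comp_apply]
  rw [lowL_mul_left hq, weightOp_mul_left hq, map_smul, lowR_mul_left, if_pos rfl,
    if_neg (rev_ne_self x).symm, zpow_brk_self, zero_add, mul_smul_comm, mul_sub]
  module

theorem lowHat_mul_left_rev (hq : q ≠ 0) (x : Ltr) (v : FA F) :
    lowHat q x (wd F [x.rev] * v) =
      (q ^ 2)⁻¹ • (wd F [x.rev] * lowHat q x v) - ((1 - q ^ 2) * (q ^ 2)⁻¹) • v := by
  simp only [lowHat, LinearMap.smul_apply, LinearMap.sub_apply, LinearMap.comp_apply]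
  rw [lowL_mul_left hq, weightOp_mul_left hq, map_smul, lowR_mul_left, if_neg (rev_ne_self x),
    if_pos rfl, zpow_brk_rev_left, weightOp_rev_weightOp hq, zero_add, smul_add, mul_smul_comm, mul_sub]
  module

theorem phi_comp_mulLeft (a : Ltr) :
    phi F q ∘ₗ LinearMap.mulLeft F (wd F [a]) = hatOp F q a ∘ₗ phi F q :=
  ext_wd fun l => by simp [phi, mkMap_wd, ← wd_cons, phiW]

theorem phi_one : phi F q (1 : FA F) = 1 := by
  simp [← wd_nil, phi, mkMap_wd, phiW]

theorem phi_lowHat (hq : q ≠ 0) (x : Ltr) (v : FA F) :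
    phi F q (lowHat q x v) = lowL F q x (phi F q v) := by
  refine apply_eq_of_wd (f := phi F q ∘ₗ lowHat q x) (g := lowL F q x ∘ₗ phi F q)
    (fun l => ?_) v
  have phi_mul_left (a : Ltr) (w : FA F) : phi F q (wd F [a] * w) = hatOp F q a (phi F q w) :=
    LinearMap.congr_fun (phi_comp_mulLeft a) w
  simp only [LinearMap.comp_apply]
  induction l with
  | nil => rw [wd_nil, lowHat_one, phi_one, lowL_one, map_zero]
  | cons a l ih =>
    rw [wd_cons]
    obtain rfl | rfl := eq_or_eq_rev a x
    · rw [lowHat_mul_left_self hq, map_add, map_smul, map_smul, phi_mul_left, phi_mul_left, ih,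
        lowL_hatOp_self hq]
    · rw [lowHat_mul_left_rev hq, map_sub, map_smul, map_smul, phi_mul_left, phi_mul_left, ih,
        lowL_hatOp_rev hq]

end SqPaper

open SqPaper in
theorem phi_intertwines_general (F : Type*) [Field F] (q : F) (hq : q ≠ 0) :
    phi F q ∘ₗ AL F = ((1 - q ^ 2) • (AL F - Kop F q ∘ₗ BR F)) ∘ₗ phi F q ∧
    phi F q ∘ₗ BL F = ((1 - q ^ 2) • (BL F - Kinv F q ∘ₗ AR F)) ∘ₗ phi F q ∧
    phi F q ∘ₗ ((1 - q ^ 2) • (lowL F q lA - lowR F q lB ∘ₗ Kop F q))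
      = lowL F q lA ∘ₗ phi F q ∧
    phi F q ∘ₗ ((1 - q ^ 2) • (lowL F q lB - lowR F q lA ∘ₗ Kinv F q))
      = lowL F q lB ∘ₗ phi F q :=
  ⟨phi_comp_mulLeft lA, phi_comp_mulLeft lB, LinearMap.ext (phi_lowHat hq lA),
    LinearMap.ext (phi_lowHat hq lB)⟩

open SqPaper in
/-- the intertwining identities satisfied by `φ` (Lemma 12.8 of the paper). -/
theorem phi_intertwines (F : Type*) [Field F] (q : F) (hq : q ≠ 0)
    (hq1 : ∀ k : ℕ, 0 < k → q ^ k ≠ 1) :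
    phi F q ∘ₗ AL F = ((1 - q ^ 2) • (AL F - Kop F q ∘ₗ BR F)) ∘ₗ phi F q ∧
    phi F q ∘ₗ BL F = ((1 - q ^ 2) • (BL F - Kinv F q ∘ₗ AR F)) ∘ₗ phi F q ∧
    phi F q ∘ₗ ((1 - q ^ 2) • (lowL F q lA - lowR F q lB ∘ₗ Kop F q))
      = lowL F q lA ∘ₗ phi F q ∧
    phi F q ∘ₗ ((1 - q ^ 2) • (lowL F q lB - lowR F q lA ∘ₗ Kinv F q))
      = lowL F q lB ∘ₗ phi F q :=
  phi_intertwines_general F q hq
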